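/- arXiv:2306.17773 — 2 statements merged into one kernel-verified Lean document; each statement's English description precedes it below -/
import Mathlib

section
/- Consider the market with contracts with D = {d₁, d₂}, H = {h₁, h₂}, 𝐗 = {x, y, w}, where x_D = y_D = d₁, x_H = y_H = h₁, w_D = d₂, w_H = h₂; hospital preferences ≻_{h₁}: {x} ≻ {y} ≻ ∅ (all other allocations unacceptable) and ≻_{h₂}: {w} ≻ ∅ (these preferences are substitutable). Let P₁ be doctor d₁'s preference {y} P₁ {x} P₁ ∅ and P'₁ the preference {y} P'₁ ∅ (x unacceptable). Then for every preference P₂ of d₂, the hospital-optimal rule satisfies φ̲_{d₁}(P₁,P₂) = {x} and φ̲_{d₁}(P'₁,P₂) = {y}; since {y} P₁ {x}, P'₁ is an obvious manipulation of φ̲ at P₁, and hence the hospital-optimal rule is obviously manipulable, even in the one-to-one matching model with contracts. -/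
set_option linter.unusedSectionVars false

namespace Matching

open Finset

/-- A many-to-one matching market with contracts: each contract `x` involves exactly one
doctor `xD x` and one hospital `xH x`; each hospital `h` has a fixed antisymmetric,
transitive and complete preference `prH h`, modelled as a linear order on sets of
contracts (only its comparisons between allocations of contracts involving `h` matter). -/
structure Market (D H X : Type*) where
  xD : X → D
  xH : X → H
  prH : H → LinearOrder (Finset X)

/-- A doctor's preference: an antisymmetric, transitive and complete preference, modelled
as a linear order on sets of contracts (only comparisons between `∅` and singletons of
contracts involving the doctor matter). -/
abbrev Pref (X : Type*) := LinearOrder (Finset X)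

/-- A profile of doctors' preferences. -/
abbrev Profile (D X : Type*) := D → Pref X

variable {D H X : Type*}
variable [DecidableEq D] [DecidableEq H] [DecidableEq X] [Fintype D] [Fintype H] [Fintype X]

/-- `Y_d` : the contracts in `Y` involving doctor `d`. -/
def docPart (M : Market D H X) (Y : Finset X) (d : D) : Finset X :=
  Y.filter fun x => M.xD x = d

/-- `Y_h` : the contracts in `Y` involving hospital `h`. -/
def hospPart (M : Market D H X) (Y : Finset X) (h : H) : Finset X :=
  Y.filter fun x => M.xH x = h

/-- An allocation: distinct contracts involve distinct doctors. -/
def IsAllocation (M : Market D H X) (Z : Finset X) : Prop :=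
  ∀ x ∈ Z, ∀ y ∈ Z, M.xD x = M.xD y → x = y

/-- `A(Y)` : the allocations contained in `Y`. -/
def allocs (M : Market D H X) (Y : Finset X) : Finset (Finset X) :=
  Y.powerset.filter fun Z => ∀ x ∈ Z, ∀ y ∈ Z, M.xD x = M.xD y → x = y

lemma empty_mem_allocs (M : Market D H X) (Y : Finset X) : ∅ ∈ allocs M Y := by
  simp [allocs]

/-- The best allocation contained in `Y` according to the linear order `pr`. -/
def bestAlloc (M : Market D H X) (pr : Pref X) (Y : Finset X) : Finset X :=
  @Finset.max' _ pr (allocs M Y) ⟨∅, empty_mem_allocs M Y⟩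

/-- `C_h(Y)` : hospital `h`'s choice set from `Y` (the `≻_h`-maximum of `A(Y_h)`). -/
def Ch (M : Market D H X) (h : H) (Y : Finset X) : Finset X :=
  bestAlloc M (M.prH h) (hospPart M Y h)

/-- `C_d(P_d, Y)` : doctor `d`'s choice set from `Y` (the `P_d`-maximum of `A(Y_d)`). -/
def Cd (M : Market D H X) (Pd : Pref X) (d : D) (Y : Finset X) : Finset X :=
  bestAlloc M Pd (docPart M Y d)

/-- `C_H(Y) = ∪_{h ∈ H} C_h(Y)`. -/
def CH (M : Market D H X) (Y : Finset X) : Finset X :=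
  univ.biUnion fun h => Ch M h Y

/-- `C_D(Y) = ∪_{d ∈ D} C_d(Y)`. -/
def CD (M : Market D H X) (P : Profile D X) (Y : Finset X) : Finset X :=
  univ.biUnion fun d => Cd M (P d) d Y

/-- Substitutability of hospital `h`'s preference: `x ∈ C_h(W)` and `x ∈ Y_h ⊆ W_h`
imply `x ∈ C_h(Y)`. -/
def Substitutable (M : Market D H X) (h : H) : Prop :=
  ∀ W Y : Finset X, hospPart M Y h ⊆ hospPart M W h →
    ∀ x ∈ hospPart M Y h, x ∈ Ch M h W → x ∈ Ch M h Y

/-- The sets `X^t` of still-available contracts in the doctor-proposing deferred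
acceptance algorithm (0-based: index `t` corresponds to iteration `t+1`). -/
def DDAsets (M : Market D H X) (P : Profile D X) : ℕ → Finset X
  | 0 => univ
  | t + 1 =>
      DDAsets M P t \ (CD M P (DDAsets M P t) \ CH M (CD M P (DDAsets M P t)))

/-- `O^t` : the offers made by the doctors at iteration `t` of D-DA (0-based). -/
def offers (M : Market D H X) (P : Profile D X) (t : ℕ) : Finset X :=
  CD M P (DDAsets M P t)

/-- `O_A^t = ∪_{k ≤ t} O^k` : the accumulated offers up to iteration `t` (0-based). -/
def accOffers (M : Market D H X) (P : Profile D X) (t : ℕ) : Finset X :=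
  (Finset.range (t + 1)).biUnion fun k => offers M P k

/-- D-DA has stopped at iteration `t`: all offers are accepted. -/
def DDAstopped (M : Market D H X) (P : Profile D X) (t : ℕ) : Prop :=
  CH M (offers M P t) = offers M P t

/-- The (0-based) last iteration of D-DA, i.e. `T - 1` where `T` is the number of
iterations of D-DA. -/
noncomputable def DDAlast (M : Market D H X) (P : Profile D X) : ℕ :=
  sInf {t | DDAstopped M P t}

/-- The output of D-DA (the algorithm provably stops by iteration `Fintype.card X`,
and once stopped the offer sets stay constant). -/
def DDAoutput (M : Market D H X) (P : Profile D X) : Finset X :=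
  CH M (offers M P (Fintype.card X))

/-- The doctor-optimal rule `φ̄`, giving doctor `d`'s outcome `φ̄_d(P)` (an element of
`A(𝐗_d)`, i.e. `∅` or a singleton). -/
def docOpt (M : Market D H X) (P : Profile D X) (d : D) : Finset X :=
  docPart M (DDAoutput M P) d

/-- The sets `X^t` of still-available contracts in the hospital-proposing deferred
acceptance algorithm (0-based). -/
def HDAsets (M : Market D H X) (P : Profile D X) : ℕ → Finset X
  | 0 => univ
  | t + 1 =>
      HDAsets M P t \ (CH M (HDAsets M P t) \ CD M P (CH M (HDAsets M P t)))

/-- The offers made by the hospitals at iteration `t` of H-DA (0-based). -/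
def hOffers (M : Market D H X) (P : Profile D X) (t : ℕ) : Finset X :=
  CH M (HDAsets M P t)

/-- The output of H-DA. -/
def HDAoutput (M : Market D H X) (P : Profile D X) : Finset X :=
  CD M P (hOffers M P (Fintype.card X))

/-- The hospital-optimal rule `φ̲`, giving doctor `d`'s outcome `φ̲_d(P)`. -/
def hospOpt (M : Market D H X) (P : Profile D X) (d : D) : Finset X :=
  docPart M (HDAoutput M P) d

/-- The option set `O^φ(P_d)` left open by `P_d` at the rule `φ`. -/
def optionSet (rule : Profile D X → D → Finset X) (d : D) (Pd : Pref X) :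
    Set (Finset X) :=
  {S | ∃ P : Profile D X, P d = Pd ∧ S = rule P d}

open scoped Classical in
/-- `W_d(pr, S)` : the `pr`-worst element of the (finite) set `S` of outcomes. -/
noncomputable def worstIn (pr : Pref X) (S : Set (Finset X)) : Finset X :=
  if h : S.Nonempty then
    @Finset.min' _ pr (Set.toFinite S).toFinset ((Set.Finite.toFinset_nonempty _).mpr h)
  else ∅

open scoped Classical in
/-- The `pr`-best element of the (finite) set `S` of outcomes. -/
noncomputable def bestIn (pr : Pref X) (S : Set (Finset X)) : Finset X :=
  if h : S.Nonempty then
    @Finset.max' _ pr (Set.toFinite S).toFinset ((Set.Finite.toFinset_nonempty _).mpr h)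
  else ∅

/-- `P'_d` is a manipulation of the rule at `P_d` : for some subprofile of the other
doctors, reporting `P'_d` gives a strictly `P_d`-better outcome than truth-telling. -/
def IsManip (rule : Profile D X → D → Finset X) (d : D) (Pd P'd : Pref X) : Prop :=
  ∃ P : Profile D X, P d = Pd ∧
    Pd.lt (rule P d) (rule (Function.update P d P'd) d)

/-- `P'_d` is an obvious manipulation of the rule at `P_d`. -/
def IsObviousManip (rule : Profile D X → D → Finset X) (d : D) (Pd P'd : Pref X) :
    Prop :=
  IsManip rule d Pd P'd ∧
    (Pd.lt (worstIn Pd (optionSet rule d Pd)) (worstIn Pd (optionSet rule d P'd)) ∨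
     Pd.lt (bestIn Pd (optionSet rule d Pd)) (bestIn Pd (optionSet rule d P'd)))

/-- A rule is not obviously manipulable (NOM). -/
def NOM (rule : Profile D X → D → Finset X) : Prop :=
  ∀ (d : D) (Pd P'd : Pref X), ¬ IsObviousManip rule d Pd P'd

/-- A rule is obviously manipulable (OM). -/
def OM (rule : Profile D X → D → Finset X) : Prop :=
  ∃ (d : D) (Pd P'd : Pref X), IsObviousManip rule d Pd P'd

/-- `Y` is a stable allocation at the profile `P` : it is an individually rational
allocation and admits no blocking contract. -/
def IsStable (M : Market D H X) (P : Profile D X) (Y : Finset X) : Prop :=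
  IsAllocation M Y ∧ CD M P Y = Y ∧ CH M Y = Y ∧
    ∀ x : X, x ∉ Y →
      ¬ (x ∈ Cd M (P (M.xD x)) (M.xD x) (insert x Y) ∧
         x ∈ Ch M (M.xH x) (insert x Y))

/-- `⌈kq⌉` where `k` is the number of stable allocations at `P`. -/
noncomputable def quantileIndex (M : Market D H X) (P : Profile D X) (q : ℝ) : ℕ :=
  ⌈(Set.ncard {Y : Finset X | IsStable M P Y} : ℝ) * q⌉₊

/-- `Z` is doctor `d`'s `⌈kq⌉`-th best outcome (according to `P d`) among the `k` stable
allocations at `P` : it is the outcome of some stable allocation, strictly fewer than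
`⌈kq⌉` stable allocations give `d` a strictly better outcome, and at least `⌈kq⌉` stable
allocations give `d` a weakly better outcome. -/
def IsQuantileOutcome (M : Market D H X) (P : Profile D X) (q : ℝ) (d : D)
    (Z : Finset X) : Prop :=
  (∃ Y : Finset X, IsStable M P Y ∧ docPart M Y d = Z) ∧
    Set.ncard {Y : Finset X | IsStable M P Y ∧ (P d).lt Z (docPart M Y d)} <
      quantileIndex M P q ∧
    quantileIndex M P q ≤
      Set.ncard {Y : Finset X | IsStable M P Y ∧ (P d).le Z (docPart M Y d)}

lemma max'_eq' {α : Type*} (pr : LinearOrder α) {S : Finset α} (hne : S.Nonempty) {a : α}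
    (ha : a ∈ S) (h : ∀ b ∈ S, pr.le b a) : @Finset.max' _ pr S hne = a :=
  @le_antisymm _ pr.toPartialOrder _ _ (@Finset.max'_le _ pr S hne a h) (@Finset.le_max' _ pr S a ha)

lemma min'_eq' {α : Type*} (pr : LinearOrder α) {S : Finset α} (hne : S.Nonempty) {a : α}
    (ha : a ∈ S) (h : ∀ b ∈ S, pr.le a b) : @Finset.min' _ pr S hne = a :=
  @le_antisymm _ pr.toPartialOrder _ _ (@Finset.min'_le _ pr S a ha) (@Finset.le_min' _ pr S hne a h)

lemma plt_ple {α : Type*} (pr : LinearOrder α) {a b : α} (h : pr.lt a b) : pr.le a b :=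
  @le_of_lt _ pr.toPartialOrder.toPreorder _ _ h

lemma plt_trans' {α : Type*} (pr : LinearOrder α) {a b c : α} (h1 : pr.lt a b) (h2 : pr.lt b c) :
    pr.lt a c :=
  @lt_trans _ pr.toPartialOrder.toPreorder _ _ _ h1 h2

lemma ple_refl {α : Type*} (pr : LinearOrder α) (a : α) : pr.le a a :=
  @le_refl _ pr.toPartialOrder.toPreorder a

lemma bestAlloc_eq (M : Market D H X) (pr : Pref X) (Y : Finset X) {a : Finset X}
    (ha : a ∈ allocs M Y) (h : ∀ b ∈ allocs M Y, pr.le b a) :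
    bestAlloc M pr Y = a :=
  max'_eq' pr _ ha h

lemma worstIn_singleton (pr : Pref X) (a : Finset X) :
    worstIn pr ({a} : Set (Finset X)) = a := by
  unfold worstIn
  rw [dif_pos (Set.singleton_nonempty a)]
  apply min'_eq' pr
  · simp
  · intro b hb
    simp only [Set.Finite.mem_toFinset, Set.mem_singleton_iff] at hb
    subst hb; exact ple_refl pr _

/-- Theorem 2: in the market with doctors `d₁ = 0, d₂ = 1`, hospitals `h₁ = 0, h₂ = 1`
and contracts `x = 0, y = 1, w = 2` (with `x_D = y_D = d₁`, `x_H = y_H = h₁`,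
`w_D = d₂`, `w_H = h₂`), hospital preferences `{x} ≻_{h₁} {y} ≻_{h₁} ∅` and
`{w} ≻_{h₂} ∅`, and doctor `d₁`'s preferences `P₁ : {y} P₁ {x} P₁ ∅` and
`P'₁ : {y} P'₁ ∅` with `x` unacceptable: for every preference `P₂` of `d₂`,
`φ̲_{d₁}(P₁,P₂) = {x}` and `φ̲_{d₁}(P'₁,P₂) = {y}`; `P'₁` is an obvious manipulation of
the hospital-optimal rule `φ̲` at `P₁`, and hence `φ̲` is obviously manipulable, even in
the one-to-one matching model with contracts. -/
theorem hospOpt_OM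
    (M : Market (Fin 2) (Fin 2) (Fin 3))
    (hxD : M.xD = ![0, 0, 1]) (hxH : M.xH = ![0, 0, 1])
    (hpr1a : (M.prH 0).lt ({1} : Finset (Fin 3)) {0})
    (hpr1b : (M.prH 0).lt (∅ : Finset (Fin 3)) {1})
    (hpr2 : (M.prH 1).lt (∅ : Finset (Fin 3)) {2})
    (P1 P'1 : Pref (Fin 3))
    (hP1a : P1.lt ({0} : Finset (Fin 3)) {1})
    (hP1b : P1.lt (∅ : Finset (Fin 3)) {0})
    (hP'1a : P'1.lt (∅ : Finset (Fin 3)) {1})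
    (hP'1b : P'1.lt ({0} : Finset (Fin 3)) ∅) :
    (∀ P : Profile (Fin 2) (Fin 3), P 0 = P1 →
        hospOpt M P 0 = {0} ∧ hospOpt M (Function.update P 0 P'1) 0 = {1}) ∧
      IsObviousManip (hospOpt M) 0 P1 P'1 ∧ OM (hospOpt M) := by
  have t01 : (M.prH 0).lt (∅ : Finset (Fin 3)) {0} := plt_trans' _ hpr1b hpr1a
  have hA01 : allocs M ({0,1} : Finset (Fin 3)) = {∅, {0}, {1}} := by
    unfold allocs; rw [hxD]; decide
  have hA2 : allocs M ({2} : Finset (Fin 3)) = {∅, {2}} := by unfold allocs; rw [hxD]; decide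
  have hA0 : allocs M ({0} : Finset (Fin 3)) = {∅, {0}} := by unfold allocs; rw [hxD]; decide
  have hA1 : allocs M ({1} : Finset (Fin 3)) = {∅, {1}} := by unfold allocs; rw [hxD]; decide
  have hAe : allocs M (∅ : Finset (Fin 3)) = {∅} := by unfold allocs; rw [hxD]; decide
  have hbe : ∀ Q : Pref (Fin 3), bestAlloc M Q ∅ = ∅ := by
    intro Q
    apply bestAlloc_eq
    · rw [hAe]; exact mem_singleton_self _
    · intro b hb; rw [hAe, mem_singleton] at hb; subst hb; exact ple_refl Q _
  have hpart : ∀ (Y : Finset (Fin 3)) (h : Fin 2),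
      hospPart M Y h = Y.filter (fun x => ![(0 : Fin 2),0,1] x = h) := by
    intro Y h; unfold hospPart; rw [hxH]
  have dpart : ∀ (Y : Finset (Fin 3)) (d : Fin 2),
      docPart M Y d = Y.filter (fun x => ![(0 : Fin 2),0,1] x = d) := by
    intro Y d; unfold docPart; rw [hxD]
  have hch0a : ∀ Y : Finset (Fin 3), hospPart M Y 0 = {0,1} → Ch M 0 Y = {0} := by
    intro Y hY
    unfold Ch; rw [hY]
    apply bestAlloc_eq
    · rw [hA01]; decide
    · intro b hb; rw [hA01] at hb
      simp only [mem_insert, mem_singleton] at hb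
      rcases hb with rfl | rfl | rfl
      · exact plt_ple _ t01
      · exact ple_refl _ _
      · exact plt_ple _ hpr1a
  have hch0b : ∀ Y : Finset (Fin 3), hospPart M Y 0 = {1} → Ch M 0 Y = {1} := by
    intro Y hY
    unfold Ch; rw [hY]
    apply bestAlloc_eq
    · rw [hA1]; decide
    · intro b hb; rw [hA1] at hb
      simp only [mem_insert, mem_singleton] at hb
      rcases hb with rfl | rfl
      · exact plt_ple _ hpr1b
      · exact ple_refl _ _
  have hch1a : ∀ Y : Finset (Fin 3), hospPart M Y 1 = {2} → Ch M 1 Y = {2} := by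
    intro Y hY
    unfold Ch; rw [hY]
    apply bestAlloc_eq
    · rw [hA2]; decide
    · intro b hb; rw [hA2] at hb
      simp only [mem_insert, mem_singleton] at hb
      rcases hb with rfl | rfl
      · exact plt_ple _ hpr2
      · exact ple_refl _ _
  have hch1b : ∀ Y : Finset (Fin 3), hospPart M Y 1 = ∅ → Ch M 1 Y = ∅ := by
    intro Y hY; unfold Ch; rw [hY]; exact hbe _
  have hCHexp : ∀ Y : Finset (Fin 3), CH M Y = Ch M 0 Y ∪ Ch M 1 Y := by
    intro Y; unfold CH
    rw [show (univ : Finset (Fin 2)) = insert 0 {1} from by decide,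
      Finset.biUnion_insert, Finset.singleton_biUnion]
  have hCHuniv : CH M univ = {0,2} := by
    rw [hCHexp, hch0a _ (by rw [hpart]; decide), hch1a _ (by rw [hpart]; decide)]; decide
  have hCH01 : CH M ({0,1} : Finset (Fin 3)) = {0} := by
    rw [hCHexp, hch0a _ (by rw [hpart]; decide), hch1b _ (by rw [hpart]; decide)]; decide
  have hCH12 : CH M ({1,2} : Finset (Fin 3)) = {1,2} := by
    rw [hCHexp, hch0b _ (by rw [hpart]; decide), hch1a _ (by rw [hpart]; decide)]; decide
  have hCH1 : CH M ({1} : Finset (Fin 3)) = {1} := by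
    rw [hCHexp, hch0b _ (by rw [hpart]; decide), hch1b _ (by rw [hpart]; decide)]; decide
  have hCDexp : ∀ (Q : Profile (Fin 2) (Fin 3)) (Y : Finset (Fin 3)),
      CD M Q Y = bestAlloc M (Q 0) (docPart M Y 0) ∪ bestAlloc M (Q 1) (docPart M Y 1) := by
    intro Q Y; unfold CD Cd
    rw [show (univ : Finset (Fin 2)) = insert 0 {1} from by decide,
      Finset.biUnion_insert, Finset.singleton_biUnion]
  have b0P1 : bestAlloc M P1 ({0} : Finset (Fin 3)) = {0} := by
    apply bestAlloc_eq
    · rw [hA0]; decide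
    · intro b hb; rw [hA0] at hb
      simp only [mem_insert, mem_singleton] at hb
      rcases hb with rfl | rfl
      · exact plt_ple _ hP1b
      · exact ple_refl _ _
  have b0P'1 : bestAlloc M P'1 ({0} : Finset (Fin 3)) = ∅ := by
    apply bestAlloc_eq
    · rw [hA0]; decide
    · intro b hb; rw [hA0] at hb
      simp only [mem_insert, mem_singleton] at hb
      rcases hb with rfl | rfl
      · exact ple_refl _ _
      · exact plt_ple _ hP'1b
  have b1P'1 : bestAlloc M P'1 ({1} : Finset (Fin 3)) = {1} := by
    apply bestAlloc_eq
    · rw [hA1]; decide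
    · intro b hb; rw [hA1] at hb
      simp only [mem_insert, mem_singleton] at hb
      rcases hb with rfl | rfl
      · exact plt_ple _ hP'1a
      · exact ple_refl _ _
  have d020 : docPart M ({0,2} : Finset (Fin 3)) 0 = {0} := by rw [dpart]; decide
  have d021 : docPart M ({0,2} : Finset (Fin 3)) 1 = {2} := by rw [dpart]; decide
  have d00 : docPart M ({0} : Finset (Fin 3)) 0 = {0} := by rw [dpart]; decide
  have d01 : docPart M ({0} : Finset (Fin 3)) 1 = ∅ := by rw [dpart]; decide
  have d120 : docPart M ({1,2} : Finset (Fin 3)) 0 = {1} := by rw [dpart]; decide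
  have d121 : docPart M ({1,2} : Finset (Fin 3)) 1 = {2} := by rw [dpart]; decide
  have d10 : docPart M ({1} : Finset (Fin 3)) 0 = {1} := by rw [dpart]; decide
  have d11 : docPart M ({1} : Finset (Fin 3)) 1 = ∅ := by rw [dpart]; decide
  have hcard : Fintype.card (Fin 3) = 3 := by simp
  have hstep : ∀ (Q : Profile (Fin 2) (Fin 3)) (t : ℕ), HDAsets M Q (t+1)
      = HDAsets M Q t \ (CH M (HDAsets M Q t) \ CD M Q (CH M (HDAsets M Q t))) :=
    fun _ _ => rfl
  have h0 : ∀ Q : Profile (Fin 2) (Fin 3), HDAsets M Q 0 = univ := fun _ => rfl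
  have main : ∀ P : Profile (Fin 2) (Fin 3), P 0 = P1 →
      hospOpt M P 0 = {0} ∧ hospOpt M (Function.update P 0 P'1) 0 = {1} := by
    intro P hP0
    set P' := Function.update P 0 P'1 with hP'def
    have hP'0 : P' 0 = P'1 := Function.update_self _ _ _
    have hP'1 : P' 1 = P 1 := Function.update_of_ne (by decide) _ _
    have cd1 : ∀ Y : Finset (Fin 3),
        CD M P Y = bestAlloc M P1 (docPart M Y 0) ∪ bestAlloc M (P 1) (docPart M Y 1) := by
      intro Y; rw [hCDexp, hP0]
    have cd2 : ∀ Y : Finset (Fin 3),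
        CD M P' Y = bestAlloc M P'1 (docPart M Y 0) ∪ bestAlloc M (P 1) (docPart M Y 1) := by
      intro Y; rw [hCDexp, hP'0, hP'1]
    have hc2mem : bestAlloc M (P 1) ({2} : Finset (Fin 3)) = ∅ ∨
        bestAlloc M (P 1) ({2} : Finset (Fin 3)) = {2} := by
      have hm : bestAlloc M (P 1) ({2} : Finset (Fin 3)) ∈ allocs M {2} := by
        unfold bestAlloc; exact @Finset.max'_mem _ (P 1) _ _
      rw [hA2] at hm
      simpa using hm
    rcases hc2mem with hc | hc
    · -- doctor d₂ rejects the offer w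
      have CDP02 : CD M P ({0,2} : Finset (Fin 3)) = {0} := by
        rw [cd1, d020, d021, b0P1, hc]; decide
      have CDP0 : CD M P ({0} : Finset (Fin 3)) = {0} := by
        rw [cd1, d00, d01, b0P1, hbe]; decide
      have s1 : HDAsets M P 1 = {0,1} := by rw [hstep, h0, hCHuniv, CDP02]; decide
      have s2 : HDAsets M P 2 = {0,1} := by rw [hstep, s1, hCH01, CDP0]; decide
      have s3 : HDAsets M P 3 = {0,1} := by rw [hstep, s2, hCH01, CDP0]; decide
      constructor
      · unfold hospOpt HDAoutput hOffers
        rw [hcard, s3, hCH01, CDP0, dpart]; decide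
      · have CDP'02 : CD M P' ({0,2} : Finset (Fin 3)) = ∅ := by
          rw [cd2, d020, d021, b0P'1, hc]; decide
        have CDP'1 : CD M P' ({1} : Finset (Fin 3)) = {1} := by
          rw [cd2, d10, d11, b1P'1, hbe]; decide
        have s1' : HDAsets M P' 1 = {1} := by rw [hstep, h0, hCHuniv, CDP'02]; decide
        have s2' : HDAsets M P' 2 = {1} := by rw [hstep, s1', hCH1, CDP'1]; decide
        have s3' : HDAsets M P' 3 = {1} := by rw [hstep, s2', hCH1, CDP'1]; decide
        unfold hospOpt HDAoutput hOffers
        rw [hcard, s3', hCH1, CDP'1, dpart]; decide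
    · -- doctor d₂ accepts the offer w
      have CDP02 : CD M P ({0,2} : Finset (Fin 3)) = {0,2} := by
        rw [cd1, d020, d021, b0P1, hc]; decide
      have s1 : HDAsets M P 1 = univ := by rw [hstep, h0, hCHuniv, CDP02]; decide
      have s2 : HDAsets M P 2 = univ := by rw [hstep, s1, hCHuniv, CDP02]; decide
      have s3 : HDAsets M P 3 = univ := by rw [hstep, s2, hCHuniv, CDP02]; decide
      constructor
      · unfold hospOpt HDAoutput hOffers
        rw [hcard, s3, hCHuniv, CDP02, dpart]; decide
      · have CDP'02 : CD M P' ({0,2} : Finset (Fin 3)) = {2} := by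
          rw [cd2, d020, d021, b0P'1, hc]; decide
        have CDP'12 : CD M P' ({1,2} : Finset (Fin 3)) = {1,2} := by
          rw [cd2, d120, d121, b1P'1, hc]; decide
        have s1' : HDAsets M P' 1 = {1,2} := by rw [hstep, h0, hCHuniv, CDP'02]; decide
        have s2' : HDAsets M P' 2 = {1,2} := by rw [hstep, s1', hCH12, CDP'12]; decide
        have s3' : HDAsets M P' 3 = {1,2} := by rw [hstep, s2', hCH12, CDP'12]; decide
        unfold hospOpt HDAoutput hOffers
        rw [hcard, s3', hCH12, CDP'12, dpart]; decide
  have hopt1 : optionSet (hospOpt M) 0 P1 = {({0} : Finset (Fin 3))} := by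
    ext S
    simp only [optionSet, Set.mem_setOf_eq, Set.mem_singleton_iff]
    constructor
    · rintro ⟨P, hP0, rfl⟩; exact (main P hP0).1
    · rintro rfl; exact ⟨fun _ => P1, rfl, ((main (fun _ => P1) rfl).1).symm⟩
  have hopt2 : optionSet (hospOpt M) 0 P'1 = {({1} : Finset (Fin 3))} := by
    ext S
    simp only [optionSet, Set.mem_setOf_eq, Set.mem_singleton_iff]
    constructor
    · rintro ⟨P, hP0, rfl⟩
      have h1 : Function.update P 0 P1 0 = P1 := Function.update_self _ _ _
      have h2 : Function.update (Function.update P 0 P1) 0 P'1 = P := by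
        rw [Function.update_idem, ← hP0]
        exact Function.update_eq_self _ _
      have h3 := (main _ h1).2
      rw [h2] at h3
      exact h3
    · rintro rfl
      exact ⟨Function.update (fun _ => P1) 0 P'1, Function.update_self _ _ _,
        ((main (fun _ => P1) rfl).2).symm⟩
  have hob : IsObviousManip (hospOpt M) 0 P1 P'1 := by
    constructor
    · exact ⟨fun _ => P1, rfl, by
        rw [(main (fun _ => P1) rfl).1, (main (fun _ => P1) rfl).2]; exact hP1a⟩
    · left
      rw [hopt1, hopt2, worstIn_singleton, worstIn_singleton]
      exact hP1a
  exact ⟨main, hob, 0, P1, P'1, hob⟩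


end Matching
end

section
/- Assume that for each pair (d,h) ∈ D × H there is at most one contract x ∈ 𝐗 with x_D = d and x_H = h (the matching model without contracts), and that every hospital's preference is substitutable. Then the hospital-optimal rule φ̲ is not obviously manipulable: no doctor has an obvious manipulation of φ̲ at any preference. -/
set_option linter.unusedSectionVars false

namespace Matching

open Finset

variable {D H X : Type*}
variable [DecidableEq D] [DecidableEq H] [DecidableEq X] [Fintype D] [Fintype H] [Fintype X]

/-! Worst case: given a profile `P` at which `d` reports truthfully, let every other doctor
rank first their contract in the H-DA outcome `ν` of `P`. Those contracts are then never
rejected, so whatever `d` reports, a contract `x` that `d` obtains is one that its hospital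
would choose alongside `ν`; as `ν` is stable, `d` does not prefer `x` to `ν_d`. Hence no
report raises the worst outcome.

Best case: any contract `x` that `d` obtains under some profile is acceptable to its
hospital on its own (substitutability). If all other doctors reject everything, the only
competition at `x`'s hospital is `d` itself, so truthful reporting already gives `d` at
least `x`. Hence no report raises the best outcome either. -/

theorem _root_.Finset.iterate_card_succ_eq {α : Type*} (f : Finset α → Finset α)
    (hf : ∀ S, f S ⊆ S) (S : Finset α) : f^[S.card + 1] S = f^[S.card] S := by
  have key : ∀ t, f^[t + 1] S = f^[t] S ∨ (f^[t + 1] S).card + t + 1 ≤ S.card := by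
    intro t
    induction t with
    | zero =>
      rcases (hf S).eq_or_ssubset with h | h
      · exact Or.inl h
      · exact Or.inr (by simpa using Finset.card_lt_card h)
    | succ t ih =>
      rw [Function.iterate_succ_apply' f (t + 1)]
      rcases ih with h | h
      · exact Or.inl (by rw [h, ← Function.iterate_succ_apply' f t]; exact h)
      · rcases (hf (f^[t + 1] S)).eq_or_ssubset with h' | h'
        · exact Or.inl h'
        · have := Finset.card_lt_card h'
          exact Or.inr (by omega)
  exact (key S.card).resolve_right (by omega)

section HospitalOptimal

variable {M : Market D H X}

lemma mem_allocs {Y Z : Finset X} : Z ∈ allocs M Y ↔ Z ⊆ Y ∧ IsAllocation M Z := by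
  simp [allocs, IsAllocation]

lemma bestAlloc_mem (pr : Pref X) (Y : Finset X) : bestAlloc M pr Y ∈ allocs M Y :=
  @Finset.max'_mem _ pr _ _

lemma le_bestAlloc (pr : Pref X) {Y Z : Finset X} (hZ : Z ∈ allocs M Y) :
    pr.le Z (bestAlloc M pr Y) :=
  @Finset.le_max' _ pr _ _ hZ

lemma bestAlloc_subset (pr : Pref X) (Y : Finset X) : bestAlloc M pr Y ⊆ Y :=
  (mem_allocs.mp (bestAlloc_mem pr Y)).1

lemma isAllocation_bestAlloc (pr : Pref X) (Y : Finset X) :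
    IsAllocation M (bestAlloc M pr Y) :=
  (mem_allocs.mp (bestAlloc_mem pr Y)).2

lemma bestAlloc_eq_of_subset (pr : Pref X) {A B : Finset X} (hA : bestAlloc M pr B ⊆ A)
    (hAB : A ⊆ B) : bestAlloc M pr A = bestAlloc M pr B :=
  pr.le_antisymm _ _
    (le_bestAlloc pr (mem_allocs.mpr ⟨(bestAlloc_subset pr A).trans hAB,
      isAllocation_bestAlloc pr A⟩))
    (le_bestAlloc pr (mem_allocs.mpr ⟨hA, isAllocation_bestAlloc pr B⟩))

lemma mem_docPart {Y : Finset X} {d : D} {x : X} :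
    x ∈ docPart M Y d ↔ x ∈ Y ∧ M.xD x = d :=
  Finset.mem_filter

lemma mem_hospPart {Y : Finset X} {h : H} {x : X} :
    x ∈ hospPart M Y h ↔ x ∈ Y ∧ M.xH x = h :=
  Finset.mem_filter

lemma docPart_eq_singleton {Z : Finset X} (hZ : IsAllocation M Z) {z : X} (hz : z ∈ Z) :
    docPart M Z (M.xD z) = {z} :=
  Finset.eq_singleton_iff_unique_mem.mpr
    ⟨mem_docPart.mpr ⟨hz, rfl⟩,
      fun y hy => hZ y (mem_docPart.mp hy).1 z hz (mem_docPart.mp hy).2⟩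

lemma Ch_congr {Y Y' : Finset X} {h : H} (hY : hospPart M Y h = hospPart M Y' h) :
    Ch M h Y = Ch M h Y' := by
  rw [Ch, Ch, hY]

lemma xH_of_mem_Ch {h : H} {Y : Finset X} {x : X} (hx : x ∈ Ch M h Y) : M.xH x = h :=
  (mem_hospPart.mp (bestAlloc_subset _ _ hx)).2

lemma mem_of_mem_Ch {h : H} {Y : Finset X} {x : X} (hx : x ∈ Ch M h Y) : x ∈ Y :=
  (mem_hospPart.mp (bestAlloc_subset _ _ hx)).1

lemma xD_of_mem_Cd {pr : Pref X} {d : D} {Y : Finset X} {x : X} (hx : x ∈ Cd M pr d Y) :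
    M.xD x = d :=
  (mem_docPart.mp (bestAlloc_subset _ _ hx)).2

lemma mem_of_mem_Cd {pr : Pref X} {d : D} {Y : Finset X} {x : X} (hx : x ∈ Cd M pr d Y) :
    x ∈ Y :=
  (mem_docPart.mp (bestAlloc_subset _ _ hx)).1

lemma empty_le_Cd (pr : Pref X) (d : D) (Y : Finset X) : pr.le ∅ (Cd M pr d Y) :=
  le_bestAlloc pr (empty_mem_allocs M _)

lemma singleton_le_Cd (pr : Pref X) {Y : Finset X} {x : X} (hx : x ∈ Y) :
    pr.le {x} (Cd M pr (M.xD x) Y) :=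
  le_bestAlloc pr (mem_allocs.mpr ⟨by simpa [mem_docPart] using hx, by simp [IsAllocation]⟩)

lemma Cd_le_Cd_of_subset (pr : Pref X) (d : D) {Y Y' : Finset X} (h : Cd M pr d Y ⊆ Y') :
    pr.le (Cd M pr d Y) (Cd M pr d Y') :=
  le_bestAlloc pr (mem_allocs.mpr
    ⟨fun _ hx => mem_docPart.mpr ⟨h hx, xD_of_mem_Cd hx⟩, isAllocation_bestAlloc _ _⟩)

lemma mem_CH {Y : Finset X} {x : X} : x ∈ CH M Y ↔ x ∈ Ch M (M.xH x) Y := by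
  simp only [CH, Finset.mem_biUnion, Finset.mem_univ, true_and]
  exact ⟨fun ⟨_, hx⟩ => xH_of_mem_Ch hx ▸ hx, fun hx => ⟨_, hx⟩⟩

lemma CH_subset (Y : Finset X) : CH M Y ⊆ Y :=
  fun _ hx => mem_of_mem_Ch (mem_CH.mp hx)

lemma mem_CD {P : Profile D X} {Y : Finset X} {x : X} :
    x ∈ CD M P Y ↔ x ∈ Cd M (P (M.xD x)) (M.xD x) Y := by
  simp only [CD, Finset.mem_biUnion, Finset.mem_univ, true_and]
  exact ⟨fun ⟨_, hx⟩ => xD_of_mem_Cd hx ▸ hx, fun hx => ⟨_, hx⟩⟩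

lemma CD_subset (P : Profile D X) (Y : Finset X) : CD M P Y ⊆ Y :=
  fun _ hx => mem_of_mem_Cd (mem_CD.mp hx)

lemma isAllocation_CD (P : Profile D X) (Y : Finset X) : IsAllocation M (CD M P Y) := by
  intro x hx y hy hxy
  rw [mem_CD] at hx hy
  rw [hxy] at hx
  exact isAllocation_bestAlloc _ _ x hx y hy hxy

lemma docPart_CD (P : Profile D X) (Y : Finset X) (d : D) :
    docPart M (CD M P Y) d = Cd M (P d) d Y := by
  ext x
  rw [mem_docPart, mem_CD]
  exact ⟨fun ⟨hx, hd⟩ => hd ▸ hx, fun hx => ⟨xD_of_mem_Cd hx ▸ hx, xD_of_mem_Cd hx⟩⟩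

lemma HDAsets_eq_iterate (P : Profile D X) (t : ℕ) :
    HDAsets M P t = (fun S => S \ (CH M S \ CD M P (CH M S)))^[t] univ := by
  induction t with
  | zero => rfl
  | succ t ih => rw [Function.iterate_succ_apply', ← ih]; rfl

lemma HDAsets_card_succ (P : Profile D X) :
    HDAsets M P (Fintype.card X + 1) = HDAsets M P (Fintype.card X) := by
  simp only [HDAsets_eq_iterate, ← Finset.card_univ]
  exact Finset.iterate_card_succ_eq _ (fun _ => Finset.sdiff_subset) _

lemma mem_HDAsets_succ {P : Profile D X} {t : ℕ} {x : X} :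
    x ∈ HDAsets M P (t + 1) ↔
      x ∈ HDAsets M P t ∧ (x ∈ hOffers M P t → x ∈ CD M P (hOffers M P t)) := by
  rw [HDAsets, Finset.mem_sdiff, Finset.mem_sdiff, hOffers]
  tauto

lemma HDAoutput_eq_hOffers (P : Profile D X) :
    HDAoutput M P = hOffers M P (Fintype.card X) := by
  refine (CD_subset _ _).antisymm fun x hx => ?_
  have hx' : x ∈ HDAsets M P (Fintype.card X + 1) := by
    rw [HDAsets_card_succ]
    exact CH_subset _ hx
  exact (mem_HDAsets_succ.mp hx').2 hx

lemma HDAoutput_subset_HDAsets (P : Profile D X) :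
    HDAoutput M P ⊆ HDAsets M P (Fintype.card X) := by
  rw [HDAoutput_eq_hOffers]
  exact CH_subset _

lemma hospOpt_eq_Cd (P : Profile D X) (d : D) :
    hospOpt M P d = Cd M (P d) d (hOffers M P (Fintype.card X)) :=
  docPart_CD _ _ _

lemma empty_le_hospOpt (P : Profile D X) (d : D) : (P d).le ∅ (hospOpt M P d) := by
  rw [hospOpt_eq_Cd]
  exact empty_le_Cd _ _ _

lemma hospOpt_eq_singleton {P : Profile D X} {d : D} {x : X} (hx : x ∈ hospOpt M P d) :
    hospOpt M P d = {x} := by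
  rw [hospOpt_eq_Cd] at hx ⊢
  exact Finset.eq_singleton_iff_unique_mem.mpr
    ⟨hx, fun y hy => isAllocation_bestAlloc _ _ y hy x hx
      (by rw [xD_of_mem_Cd hy, xD_of_mem_Cd hx])⟩

/-- A held contract is not rejected, so by substitutability its hospital offers it again. -/
lemma Cd_hOffers_le_succ (hsub : ∀ h : H, Substitutable M h) (P : Profile D X) (d : D)
    (t : ℕ) :
    (P d).le (Cd M (P d) d (hOffers M P t)) (Cd M (P d) d (hOffers M P (t + 1))) := by
  refine Cd_le_Cd_of_subset _ _ fun c hc => mem_CH.mpr ?_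
  have hc_offer : c ∈ hOffers M P t := mem_of_mem_Cd hc
  have hc_kept : c ∈ HDAsets M P (t + 1) :=
    mem_HDAsets_succ.mpr ⟨CH_subset _ hc_offer,
      fun _ => mem_CD.mpr (xD_of_mem_Cd hc ▸ hc)⟩
  refine hsub _ (HDAsets M P t) _ ?_ c (mem_hospPart.mpr ⟨hc_kept, rfl⟩) (mem_CH.mp hc_offer)
  exact Finset.filter_subset_filter _ Finset.sdiff_subset

lemma singleton_le_Cd_hOffers_of_notMem (hsub : ∀ h : H, Substitutable M h)
    {P : Profile D X} {x : X} (t : ℕ) (hx : x ∉ HDAsets M P t) :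
    (P (M.xD x)).le {x} (Cd M (P (M.xD x)) (M.xD x) (hOffers M P t)) := by
  induction t with
  | zero => exact absurd (Finset.mem_univ x) hx
  | succ t ih =>
    refine (P (M.xD x)).le_trans _ _ _ ?_ (Cd_hOffers_le_succ hsub P _ t)
    by_cases hxt : x ∈ HDAsets M P t
    · have hx_offer : x ∈ hOffers M P t := by
        by_contra h
        exact hx (mem_HDAsets_succ.mpr ⟨hxt, fun h' => absurd h' h⟩)
      exact singleton_le_Cd _ hx_offer
    · exact ih hxt

lemma singleton_le_hospOpt_of_notMem (hsub : ∀ h : H, Substitutable M h)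
    {P : Profile D X} {x : X} (hx : x ∉ HDAsets M P (Fintype.card X)) :
    (P (M.xD x)).le {x} (hospOpt M P (M.xD x)) := by
  rw [hospOpt_eq_Cd]
  exact singleton_le_Cd_hOffers_of_notMem hsub _ hx

/-- The no-blocking half of the stability of the H-DA outcome. -/
lemma singleton_le_hospOpt_of_mem_Ch_insert (hsub : ∀ h : H, Substitutable M h)
    {P : Profile D X} {x : X} (hx : x ∈ Ch M (M.xH x) (insert x (HDAoutput M P))) :
    (P (M.xD x)).le {x} (hospOpt M P (M.xD x)) := by
  by_cases hxY : x ∈ HDAsets M P (Fintype.card X)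
  · have hCh : Ch M (M.xH x) (insert x (HDAoutput M P)) =
        Ch M (M.xH x) (HDAsets M P (Fintype.card X)) := by
      refine bestAlloc_eq_of_subset _ (fun c hc => ?_)
        (Finset.filter_subset_filter _
          (Finset.insert_subset hxY (HDAoutput_subset_HDAsets P)))
      refine mem_hospPart.mpr ⟨Finset.mem_insert_of_mem ?_, xH_of_mem_Ch hc⟩
      rw [HDAoutput_eq_hOffers]
      exact mem_CH.mpr (xH_of_mem_Ch hc ▸ hc)
    rw [hospOpt_eq_Cd]
    exact singleton_le_Cd _ (mem_CH.mpr (hCh ▸ hx))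
  · exact singleton_le_hospOpt_of_notMem hsub hxY

lemma mem_Ch_singleton_of_mem_HDAoutput (hsub : ∀ h : H, Substitutable M h)
    {P : Profile D X} {x : X} (hx : x ∈ HDAoutput M P) : x ∈ Ch M (M.xH x) {x} := by
  rw [HDAoutput_eq_hOffers] at hx
  exact hsub _ _ {x}
    (Finset.filter_subset_filter _ (Finset.singleton_subset_iff.mpr (CH_subset _ hx)))
    x (mem_hospPart.mpr ⟨Finset.mem_singleton_self x, rfl⟩) (mem_CH.mp hx)

noncomputable abbrev prefTop (A : Finset X) : Pref X :=
  LinearOrder.lift' (fun S => toLex (decide (S = A), Fintype.equivFin (Finset X) S))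
    fun _ _ h => (Fintype.equivFin _).injective (congrArg (fun p => (ofLex p).2) h)

lemma le_prefTop (A S : Finset X) : (prefTop A).le S A :=
  Prod.Lex.toLex_le_toLex'.mpr
    ⟨by simp, fun h => (of_decide_eq_true (h.trans (decide_eq_true rfl))) ▸ le_rfl⟩

lemma eq_of_prefTop_le {A S : Finset X} (h : (prefTop A).le A S) : S = A :=
  (prefTop A).le_antisymm _ _ (le_prefTop A S) h

lemma Cd_prefTop_empty (d : D) (Y : Finset X) : Cd M (prefTop ∅) d Y = ∅ :=
  eq_of_prefTop_le (empty_le_Cd _ _ _)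

lemma mem_HDAsets_of_prefTop (hsub : ∀ h : H, Substitutable M h) {P : Profile D X} {z : X}
    (hz : P (M.xD z) = prefTop {z}) : z ∈ HDAsets M P (Fintype.card X) := by
  by_contra hzY
  have hle := singleton_le_hospOpt_of_notMem hsub hzY
  rw [hz] at hle
  have hz_out : z ∈ hospOpt M P (M.xD z) := eq_of_prefTop_le hle ▸ Finset.mem_singleton_self z
  exact hzY (HDAoutput_subset_HDAsets P (mem_docPart.mp hz_out).1)

noncomputable abbrev lockInProfile (M : Market D H X) (Z : Finset X) (d : D) (Q : Pref X) :
    Profile D X :=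
  Function.update (fun e => prefTop (docPart M Z e)) d Q

lemma lockInProfile_self (Z : Finset X) (d : D) (Q : Pref X) :
    lockInProfile M Z d Q d = Q :=
  Function.update_self _ _ _

lemma lockInProfile_of_ne {Z : Finset X} {d e : D} (Q : Pref X) (he : e ≠ d) :
    lockInProfile M Z d Q e = prefTop (docPart M Z e) :=
  Function.update_of_ne he _ _

lemma hospOpt_lockInProfile_le (hone : ∀ x y : X, M.xD x = M.xD y → M.xH x = M.xH y → x = y)
    (hsub : ∀ h : H, Substitutable M h) (P : Profile D X) (d : D) (Q : Pref X) :
    (P d).le (hospOpt M (lockInProfile M (HDAoutput M P) d Q) d) (hospOpt M P d) := by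
  set P' := lockInProfile M (HDAoutput M P) d Q with hP'
  obtain hμ | ⟨x, hx⟩ := (hospOpt M P' d).eq_empty_or_nonempty
  · rw [hμ]
    exact empty_le_hospOpt P d
  obtain ⟨hxν', hxd⟩ := mem_docPart.mp hx
  rw [hospOpt_eq_singleton hx, ← hxd]
  apply singleton_le_hospOpt_of_mem_Ch_insert hsub
  have hx_offer : x ∈ hOffers M P' (Fintype.card X) := HDAoutput_eq_hOffers (M := M) P' ▸ hxν'
  refine hsub _ _ _ (fun z hz => ?_) x (mem_hospPart.mpr ⟨Finset.mem_insert_self _ _, rfl⟩)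
    (mem_CH.mp hx_offer)
  obtain ⟨hz, hzh⟩ := mem_hospPart.mp hz
  refine mem_hospPart.mpr ⟨?_, hzh⟩
  rcases Finset.mem_insert.mp hz with rfl | hzν
  · exact CH_subset _ hx_offer
  by_cases hzd : M.xD z = d
  · rw [hone z x (hzd.trans hxd.symm) hzh]
    exact CH_subset _ hx_offer
  · refine mem_HDAsets_of_prefTop hsub ?_
    rw [hP', lockInProfile_of_ne Q hzd,
      docPart_eq_singleton (Z := HDAoutput M P) (isAllocation_CD _ _) hzν]

lemma le_hospOpt_lockInProfile_empty
    (hone : ∀ x y : X, M.xD x = M.xD y → M.xH x = M.xH y → x = y)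
    (hsub : ∀ h : H, Substitutable M h) (P : Profile D X) (d : D) (Pd : Pref X) :
    Pd.le (hospOpt M P d) (hospOpt M (lockInProfile M ∅ d Pd) d) := by
  set P' := lockInProfile M ∅ d Pd with hP'
  obtain hμ | ⟨x, hx⟩ := (hospOpt M P d).eq_empty_or_nonempty
  · rw [hμ, ← lockInProfile_self (M := M) ∅ d Pd]
    exact empty_le_hospOpt P' d
  obtain ⟨hxν, hxd⟩ := mem_docPart.mp hx
  have hν_d : ∀ z ∈ HDAoutput M P', M.xD z = d := by
    intro z hz
    by_contra hzd
    rw [HDAoutput, mem_CD, hP', lockInProfile_of_ne Pd hzd] at hz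
    simp [docPart, Cd_prefTop_empty] at hz
  have hhosp : hospPart M (insert x (HDAoutput M P')) (M.xH x) = hospPart M {x} (M.xH x) := by
    ext z
    simp only [mem_hospPart, Finset.mem_insert, Finset.mem_singleton]
    constructor
    · rintro ⟨rfl | hz, hzh⟩
      · exact ⟨rfl, hzh⟩
      · exact ⟨hone z x ((hν_d z hz).trans hxd.symm) hzh, hzh⟩
    · rintro ⟨rfl, hzh⟩
      exact ⟨Or.inl rfl, hzh⟩
  have hle := singleton_le_hospOpt_of_mem_Ch_insert hsub
    ((Ch_congr hhosp).symm ▸ mem_Ch_singleton_of_mem_HDAoutput hsub hxν :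
      x ∈ Ch M (M.xH x) (insert x (HDAoutput M P')))
  rw [hxd, hP', lockInProfile_self] at hle
  rw [hospOpt_eq_singleton hx]
  exact hle

end HospitalOptimal

lemma worstIn_le (pr : Pref X) {S : Set (Finset X)} {s : Finset X} (hs : s ∈ S) :
    pr.le (worstIn pr S) s := by
  rw [worstIn, dif_pos ⟨s, hs⟩]
  exact @Finset.min'_le _ pr _ s ((Set.Finite.mem_toFinset _).mpr hs)

lemma worstIn_mem (pr : Pref X) {S : Set (Finset X)} (hS : S.Nonempty) : worstIn pr S ∈ S := by
  rw [worstIn, dif_pos hS]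
  exact (Set.Finite.mem_toFinset _).mp (@Finset.min'_mem _ pr _ _)

lemma le_bestIn (pr : Pref X) {S : Set (Finset X)} {s : Finset X} (hs : s ∈ S) :
    pr.le s (bestIn pr S) := by
  rw [bestIn, dif_pos ⟨s, hs⟩]
  exact @Finset.le_max' _ pr _ s ((Set.Finite.mem_toFinset _).mpr hs)

lemma bestIn_mem (pr : Pref X) {S : Set (Finset X)} (hS : S.Nonempty) : bestIn pr S ∈ S := by
  rw [bestIn, dif_pos hS]
  exact (Set.Finite.mem_toFinset _).mp (@Finset.max'_mem _ pr _ _)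

lemma optionSet_nonempty (rule : Profile D X → D → Finset X) (d : D) (Q : Pref X) :
    (optionSet rule d Q).Nonempty :=
  ⟨_, fun _ => Q, rfl, rfl⟩

lemma NOM_of_exists_le (rule : Profile D X → D → Finset X)
    (hworst : ∀ (d : D) (P : Profile D X) (Q : Pref X),
      ∃ P' : Profile D X, P' d = Q ∧ (P d).le (rule P' d) (rule P d))
    (hbest : ∀ (d : D) (P : Profile D X) (Pd : Pref X),
      ∃ P' : Profile D X, P' d = Pd ∧ Pd.le (rule P d) (rule P' d)) :
    NOM rule := by
  rintro d Pd Q ⟨-, hlt | hlt⟩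
  · obtain ⟨P, rfl, hP⟩ := worstIn_mem Pd (optionSet_nonempty rule d Pd)
    obtain ⟨P', hP'd, hle⟩ := hworst d P Q
    refine @not_lt_of_ge _ (P d).toPreorder _ _ ?_ hlt
    rw [hP]
    exact (P d).le_trans _ _ _ (worstIn_le _ ⟨P', hP'd, rfl⟩) hle
  · obtain ⟨P, rfl, hP⟩ := bestIn_mem Pd (optionSet_nonempty rule d Q)
    obtain ⟨P', hP'd, hle⟩ := hbest d P Pd
    refine @not_lt_of_ge _ Pd.toPreorder _ _ ?_ hlt
    rw [hP]
    exact Pd.le_trans _ _ _ hle (le_bestIn _ ⟨P', hP'd, rfl⟩)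

/-- Theorem 3: in the matching model without contracts (at most one contract per
doctor-hospital pair), if every hospital's preference is substitutable then the
hospital-optimal rule is not obviously manipulable. -/
theorem hospOpt_NOM (M : Market D H X)
    (hone : ∀ x y : X, M.xD x = M.xD y → M.xH x = M.xH y → x = y)
    (hsub : ∀ h : H, Substitutable M h) :
    NOM (hospOpt M) :=
  NOM_of_exists_le _
    (fun d P Q => ⟨_, lockInProfile_self _ d Q, hospOpt_lockInProfile_le hone hsub P d Q⟩)
    (fun d P Pd =>
      ⟨_, lockInProfile_self _ d Pd, le_hospOpt_lockInProfile_empty hone hsub P d Pd⟩)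

end Matching
end
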